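/- Let ρ be a d×d complex positive semidefinite matrix with trace 1, let 0 < α < 1, and let Φ_1, …, Φ_N (N ≥ 2) be quantum channels, where Φ_s has Kraus operators K^s_1, …, K^s_n (d×d complex matrices with ∑_{i=1}^n (K^s_i)† K^s_i = I). Then for all permutations π_1, …, π_N of {1, …, n} and each x ∈ {0, 1}: ∑_{s=1}^N I^α_ρ(Φ_s) ≥ (1/(2N − 2)) · [ ∑_{1 ≤ s < t ≤ N} ∑_{i=1}^n I^α_ρ(K^s_{π_s(i)} + (−1)^x K^t_{π_t(i)}) + (2/(N(N − 1))) · (∑_{1 ≤ s < t ≤ N} √(∑_{i=1}^n I^α_ρ(K^s_{π_s(i)} + (−1)^{x+1} K^t_{π_t(i)})))² ], where √ denotes the real square root. -/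

import Mathlib

open Matrix Finset
open scoped ComplexOrder

/-- `ρ^α` via the continuous functional calculus applied to `t ↦ t ^ α`. -/
noncomputable def mpow {d : ℕ} (ρ : Matrix (Fin d) (Fin d) ℂ) (α : ℝ) :
    Matrix (Fin d) (Fin d) ℂ :=
  cfc (fun t : ℝ => t ^ α) ρ

/-- The Wigner–Yanase–Dyson skew information
`I^α_ρ(K) = −(1/2) Tr([ρ^α, K†] [ρ^{1−α}, K])` of an arbitrary matrix `K`. -/
noncomputable def wyd {d : ℕ} (ρ : Matrix (Fin d) (Fin d) ℂ) (α : ℝ)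
    (K : Matrix (Fin d) (Fin d) ℂ) : ℝ :=
  (-(1 / 2 : ℂ) *
    ((mpow ρ α * Kᴴ - Kᴴ * mpow ρ α) * (mpow ρ (1 - α) * K - K * mpow ρ (1 - α))).trace).re

/-!
In an eigenbasis of `ρ` the skew information is
`I^α_ρ(K) = ½ ∑_{i,j} (λ_i^α - λ_j^α)(λ_i^{1-α} - λ_j^{1-α}) |K_{ji}|²`, a positive semidefinite
Hermitian form in `K` (both powers are monotone). Hence it obeys the parallelogram law, and the
two signed sums attached to a pair of channels add up to `2 (I_ρ(Φ_s) + I_ρ(Φ_t))` whatever the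
sign `(-1)^x` and the relabellings `π`. Summing over the `N(N-1)/2` pairs gives
`(2N - 2) ∑_s I_ρ(Φ_s)`, and Cauchy–Schwarz bounds the sum of the second kind of terms from below
by the squared sum of their square roots divided by the number of pairs.
-/

open Unitary

namespace Finset

variable {ι M : Type*} [Fintype ι] [LinearOrder ι]

theorem sum_filter_lt_add [AddCommMonoid M] (f : ι → M) :
    ∑ p ∈ univ.filter (fun p : ι × ι => p.1 < p.2), (f p.1 + f p.2)
      = (Fintype.card ι - 1) • ∑ i, f i := by
  have hswap : ∑ p ∈ univ.filter (fun p : ι × ι => p.1 < p.2), f p.2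
      = ∑ p ∈ univ.filter (fun p : ι × ι => p.2 < p.1), f p.1 :=
    sum_equiv (Equiv.prodComm ι ι) (by simp) (fun _ _ => rfl)
  have hdisj : Disjoint (univ.filter (fun p : ι × ι => p.1 < p.2))
      (univ.filter (fun p : ι × ι => p.2 < p.1)) :=
    disjoint_filter.mpr fun _ _ h => h.asymm
  rw [sum_add_distrib, hswap, ← sum_union hdisj, smul_sum]
  calc ∑ p ∈ univ.filter (fun p : ι × ι => p.1 < p.2) ∪ univ.filter (fun p => p.2 < p.1), f p.1
      = ∑ i, ∑ j ∈ univ.erase i, f i := by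
        rw [← filter_or, sum_filter, Fintype.sum_prod_type]
        refine sum_congr rfl fun i _ => ?_
        rw [← sum_filter]
        congr 1
        ext j
        simp [lt_or_lt_iff_ne, ne_comm]
    _ = ∑ i, (Fintype.card ι - 1) • f i := by simp [card_erase_of_mem]

theorem card_filter_lt_mul_two :
    #(univ.filter (fun p : ι × ι => p.1 < p.2)) * 2 = Fintype.card ι * (Fintype.card ι - 1) := by
  have h := sum_filter_lt_add (ι := ι) (fun _ => 1)
  simp only [sum_const, smul_eq_mul, card_univ, mul_one] at h
  rw [h]
  ring

end Finset

theorem sq_sum_sqrt_le_card_mul_sum {ι : Type*} (s : Finset ι) {f : ι → ℝ} (hf : ∀ i ∈ s, 0 ≤ f i) :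
    (∑ i ∈ s, √(f i)) ^ 2 ≤ #s * ∑ i ∈ s, f i := by
  calc (∑ i ∈ s, √(f i)) ^ 2 ≤ #s * ∑ i ∈ s, √(f i) ^ 2 := sq_sum_le_card_mul_sum_sq
    _ = #s * ∑ i ∈ s, f i := by rw [sum_congr rfl fun i hi => Real.sq_sqrt (hf i hi)]

theorem le_sum_of_pair_sum_eq {ι : Type*} [Fintype ι] [LinearOrder ι] (hι : 2 ≤ Fintype.card ι)
    (J : ι → ℝ) (u v : ι × ι → ℝ) (huv : ∀ p, u p + v p = 2 * (J p.1 + J p.2))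
    (hv : ∀ p, 0 ≤ v p) :
    (1 / (2 * (Fintype.card ι : ℝ) - 2)) *
        (∑ p ∈ univ.filter (fun p : ι × ι => p.1 < p.2), u p +
          (2 / ((Fintype.card ι : ℝ) * ((Fintype.card ι : ℝ) - 1))) *
            (∑ p ∈ univ.filter (fun p : ι × ι => p.1 < p.2), √(v p)) ^ 2) ≤ ∑ i, J i := by
  set S := univ.filter (fun p : ι × ι => p.1 < p.2)
  set N : ℝ := (Fintype.card ι : ℝ)
  have hN : 2 ≤ N := by simp only [N]; exact_mod_cast hι
  have h2N : 0 < 2 * N - 2 := by linarith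
  have hsum : ∑ p ∈ S, u p + ∑ p ∈ S, v p = (2 * N - 2) * ∑ i, J i := by
    have h := sum_filter_lt_add J
    rw [nsmul_eq_mul, Nat.cast_sub (by omega), Nat.cast_one] at h
    rw [← sum_add_distrib, sum_congr rfl fun p _ => huv p, ← mul_sum, h]
    ring
  have hcard : (#S : ℝ) * 2 = N * (N - 1) := by
    have h := congrArg (Nat.cast (R := ℝ)) (card_filter_lt_mul_two (ι := ι))
    push_cast [Nat.cast_sub (by omega : 1 ≤ Fintype.card ι)] at h
    exact h
  have hCS : 2 / (N * (N - 1)) * (∑ p ∈ S, √(v p)) ^ 2 ≤ ∑ p ∈ S, v p := by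
    rw [← hcard, div_mul_eq_mul_div, div_le_iff₀ (by nlinarith)]
    nlinarith [sq_sum_sqrt_le_card_mul_sum S fun p _ => hv p]
  calc _ ≤ (1 / (2 * N - 2)) * ((2 * N - 2) * ∑ i, J i) := by
        gcongr
        linarith
    _ = ∑ i, J i := by rw [← mul_assoc, one_div_mul_cancel h2N.ne', one_mul]

theorem Real.rpow_sub_rpow_mul_rpow_sub_rpow_nonneg {a b r s : ℝ} (ha : 0 ≤ a) (hb : 0 ≤ b)
    (hr : 0 ≤ r) (hs : 0 ≤ s) : 0 ≤ (a ^ r - b ^ r) * (a ^ s - b ^ s) := by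
  rcases le_total a b with h | h
  · exact mul_nonneg_of_nonpos_of_nonpos (sub_nonpos.2 (rpow_le_rpow ha h hr))
      (sub_nonpos.2 (rpow_le_rpow ha h hs))
  · exact mul_nonneg (sub_nonneg.2 (rpow_le_rpow hb h hr)) (sub_nonneg.2 (rpow_le_rpow hb h hs))

namespace Matrix

variable {n : Type*} [Fintype n] [DecidableEq n]

theorem trace_conjStarAlgAut {R : Type*} [CommRing R] [StarRing R] (u : unitary (Matrix n n R))
    (X : Matrix n n R) : (conjStarAlgAut R _ u X).trace = X.trace := by
  rw [conjStarAlgAut_apply, trace_mul_cycle, coe_star_mul_self, one_mul]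

theorem trace_commutator_mul_commutator_diagonal (p q : n → ℝ) (L : Matrix n n ℂ) :
    ((diagonal (fun i => (p i : ℂ)) * Lᴴ - Lᴴ * diagonal (fun i => (p i : ℂ))) *
        (diagonal (fun i => (q i : ℂ)) * L - L * diagonal (fun i => (q i : ℂ)))).trace =
      -∑ i, ∑ j, (((p i - p j) * (q i - q j) * Complex.normSq (L j i) : ℝ) : ℂ) := by
  have hp : diagonal (fun i => (p i : ℂ)) * Lᴴ - Lᴴ * diagonal (fun i => (p i : ℂ)) =
      of fun i j => ((p i - p j : ℝ) : ℂ) * star (L j i) := by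
    ext i j
    simp only [sub_apply, diagonal_mul, mul_diagonal, conjTranspose_apply, of_apply]
    push_cast
    ring
  have hq : diagonal (fun i => (q i : ℂ)) * L - L * diagonal (fun i => (q i : ℂ)) =
      of fun i j => ((q i - q j : ℝ) : ℂ) * L i j := by
    ext i j
    simp only [sub_apply, diagonal_mul, mul_diagonal, of_apply]
    push_cast
    ring
  simp only [hp, hq, trace, diag, mul_apply, of_apply, ← sum_neg_distrib]
  refine sum_congr rfl fun i _ => sum_congr rfl fun j _ => ?_
  push_cast
  rw [Complex.normSq_eq_conj_mul_self, ← Complex.star_def]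
  ring

theorem mpow_eq_conjStarAlgAut {d : ℕ} {ρ : Matrix (Fin d) (Fin d) ℂ} (hρ : ρ.IsHermitian)
    (β : ℝ) : mpow ρ β = conjStarAlgAut ℂ _ hρ.eigenvectorUnitary
      (diagonal fun i => ((hρ.eigenvalues i ^ β : ℝ) : ℂ)) := by
  rw [mpow, hρ.cfc_eq]
  rfl

end Matrix

theorem wyd_eq_sum_eigenvalues {d : ℕ} {ρ : Matrix (Fin d) (Fin d) ℂ} (hρ : ρ.IsHermitian)
    (α : ℝ) (K : Matrix (Fin d) (Fin d) ℂ) :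
    wyd ρ α K = ∑ i, ∑ j,
      (hρ.eigenvalues i ^ α - hρ.eigenvalues j ^ α) *
        (hρ.eigenvalues i ^ (1 - α) - hρ.eigenvalues j ^ (1 - α)) *
        Complex.normSq ((conjStarAlgAut ℂ _ hρ.eigenvectorUnitary).symm K j i) / 2 := by
  generalize hL : (conjStarAlgAut ℂ (Matrix (Fin d) (Fin d) ℂ) hρ.eigenvectorUnitary).symm K = L
  obtain rfl : K = conjStarAlgAut ℂ _ hρ.eigenvectorUnitary L := by
    rw [← hL, StarAlgEquiv.apply_symm_apply]
  rw [wyd, ← star_eq_conjTranspose, mpow_eq_conjStarAlgAut hρ α,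
    mpow_eq_conjStarAlgAut hρ (1 - α)]
  simp only [← map_star, ← map_mul, ← map_sub]
  rw [trace_conjStarAlgAut, star_eq_conjTranspose, trace_commutator_mul_commutator_diagonal]
  norm_num [neg_mul_neg, Complex.re_sum, mul_sum, div_eq_inv_mul]

theorem wyd_nonneg {d : ℕ} {ρ : Matrix (Fin d) (Fin d) ℂ} (hρ : ρ.PosSemidef) {α : ℝ}
    (hα0 : 0 ≤ α) (hα1 : α ≤ 1) (K : Matrix (Fin d) (Fin d) ℂ) : 0 ≤ wyd ρ α K := by
  rw [wyd_eq_sum_eigenvalues hρ.1]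
  refine sum_nonneg fun i _ => sum_nonneg fun j _ => div_nonneg (mul_nonneg ?_
    (Complex.normSq_nonneg _)) zero_le_two
  exact Real.rpow_sub_rpow_mul_rpow_sub_rpow_nonneg (hρ.eigenvalues_nonneg i)
    (hρ.eigenvalues_nonneg j) hα0 (sub_nonneg.2 hα1)

theorem wyd_smul {d : ℕ} (ρ : Matrix (Fin d) (Fin d) ℂ) (α : ℝ) (c : ℂ)
    (K : Matrix (Fin d) (Fin d) ℂ) : wyd ρ α (c • K) = Complex.normSq c * wyd ρ α K := by
  simp only [wyd, conjTranspose_smul, mul_smul_comm, smul_mul_assoc, ← smul_sub, smul_smul,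
    trace_smul, smul_eq_mul]
  rw [Complex.star_def, Complex.mul_conj, mul_left_comm, Complex.re_ofReal_mul]

theorem wyd_add_add_wyd_sub {d : ℕ} (ρ : Matrix (Fin d) (Fin d) ℂ) (α : ℝ)
    (A B : Matrix (Fin d) (Fin d) ℂ) :
    wyd ρ α (A + B) + wyd ρ α (A - B) = 2 * wyd ρ α A + 2 * wyd ρ α B := by
  simp only [wyd, conjTranspose_add, conjTranspose_sub]
  generalize mpow ρ α = P
  generalize mpow ρ (1 - α) = Q
  have key : (P * (Aᴴ + Bᴴ) - (Aᴴ + Bᴴ) * P) * (Q * (A + B) - (A + B) * Q) +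
        (P * (Aᴴ - Bᴴ) - (Aᴴ - Bᴴ) * P) * (Q * (A - B) - (A - B) * Q) =
      (2 : ℂ) • ((P * Aᴴ - Aᴴ * P) * (Q * A - A * Q)) +
        (2 : ℂ) • ((P * Bᴴ - Bᴴ * P) * (Q * B - B * Q)) := by
    simp only [two_smul]
    noncomm_ring
  rw [← Complex.add_re, ← mul_add, ← trace_add, key, trace_add, trace_smul, trace_smul]
  norm_num [Complex.mul_re, mul_add, ← mul_assoc]

theorem channel_uncertainty_LB3_general (d n N : ℕ) (hN : 2 ≤ N)
    (ρ : Matrix (Fin d) (Fin d) ℂ) (hρ : ρ.PosSemidef)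
    (α : ℝ) (hα0 : 0 < α) (hα1 : α < 1)
    (K : Fin N → Fin n → Matrix (Fin d) (Fin d) ℂ)
    (π : Fin N → Equiv.Perm (Fin n)) :
    ∀ x ∈ ({0, 1} : Set ℕ),
      ∑ s, ∑ i, wyd ρ α (K s i) ≥
        (1 / (2 * (N : ℝ) - 2)) *
          ((∑ p ∈ univ.filter (fun p : Fin N × Fin N => p.1 < p.2),
              ∑ i, wyd ρ α (K p.1 (π p.1 i) + ((-1 : ℂ) ^ x) • K p.2 (π p.2 i))) +
            (2 / ((N : ℝ) * ((N : ℝ) - 1))) *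
              (∑ p ∈ univ.filter (fun p : Fin N × Fin N => p.1 < p.2),
                Real.sqrt
                  (∑ i, wyd ρ α (K p.1 (π p.1 i) + ((-1 : ℂ) ^ (x + 1)) • K p.2 (π p.2 i)))) ^ 2) := by
  intro x _
  have hperm (s : Fin N) : ∑ i, wyd ρ α (K s (π s i)) = ∑ i, wyd ρ α (K s i) :=
    Equiv.sum_comp (π s) fun i => wyd ρ α (K s i)
  have hsign : Complex.normSq ((-1 : ℂ) ^ x) = 1 := by simp
  have key := le_sum_of_pair_sum_eq (by simpa using hN) (fun s => ∑ i, wyd ρ α (K s i))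
    (fun p => ∑ i, wyd ρ α (K p.1 (π p.1 i) + ((-1 : ℂ) ^ x) • K p.2 (π p.2 i)))
    (fun p => ∑ i, wyd ρ α (K p.1 (π p.1 i) + ((-1 : ℂ) ^ (x + 1)) • K p.2 (π p.2 i)))
    (fun p => by
      rw [← sum_add_distrib, ← hperm p.1, ← hperm p.2, ← sum_add_distrib, mul_sum]
      refine sum_congr rfl fun i _ => ?_
      rw [pow_succ, mul_neg_one, neg_smul, ← sub_eq_add_neg, wyd_add_add_wyd_sub, wyd_smul,
        hsign, one_mul, mul_add])
    (fun p => sum_nonneg fun i _ => wyd_nonneg hρ hα0.le hα1.le _)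
  rwa [Fintype.card_fin] at key

theorem channel_uncertainty_LB3 (d n N : ℕ) (hN : 2 ≤ N)
    (ρ : Matrix (Fin d) (Fin d) ℂ) (hρ : ρ.PosSemidef) (hTr : ρ.trace = 1)
    (α : ℝ) (hα0 : 0 < α) (hα1 : α < 1)
    (K : Fin N → Fin n → Matrix (Fin d) (Fin d) ℂ)
    (hK : ∀ s, ∑ i, (K s i)ᴴ * K s i = 1)
    (π : Fin N → Equiv.Perm (Fin n)) :
    ∀ x ∈ ({0, 1} : Set ℕ),
      ∑ s, ∑ i, wyd ρ α (K s i) ≥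
        (1 / (2 * (N : ℝ) - 2)) *
          ((∑ p ∈ univ.filter (fun p : Fin N × Fin N => p.1 < p.2),
              ∑ i, wyd ρ α (K p.1 (π p.1 i) + ((-1 : ℂ) ^ x) • K p.2 (π p.2 i))) +
            (2 / ((N : ℝ) * ((N : ℝ) - 1))) *
              (∑ p ∈ univ.filter (fun p : Fin N × Fin N => p.1 < p.2),
                Real.sqrt
                  (∑ i, wyd ρ α (K p.1 (π p.1 i) + ((-1 : ℂ) ^ (x + 1)) • K p.2 (π p.2 i)))) ^ 2) :=
  channel_uncertainty_LB3_general d n N hN ρ hρ α hα0 hα1 K π
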